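/- Let H be a complex Hilbert space and let A, B be bounded linear operators on H. Let T be the bounded operator on H × H given by T(u, v) = (A u − B v, 0), and let P be the orthogonal projection of H × H onto the kernel of T. Define bounded operators on H by X u := (P(u, 0)).1 and Y v := (P(0, v)).2. Then the range of √(A ∘ X ∘ A*) is contained in (range A) ∩ (range B), and the range of √(B ∘ Y ∘ B*) is contained in (range A) ∩ (range B), where √ denotes the positive square root of a positive operator (A ∘ X ∘ A* and B ∘ Y ∘ B* are positive since X and Y are positive). -/

import Mathlib

set_option synthInstance.maxHeartbeats 400000
set_option maxHeartbeats 1000000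

open ContinuousLinearMap

variable {H : Type*} [NormedAddCommGroup H] [InnerProductSpace ℂ H] [CompleteSpace H]

/-- The orthogonal projection of the Hilbert space `H × H` (with the product, i.e. `L²`,
inner product) onto the kernel of `T`, regarded as a bounded operator. -/
noncomputable def kerProj (T : WithLp 2 (H × H) →L[ℂ] WithLp 2 (H × H)) :
    WithLp 2 (H × H) →L[ℂ] WithLp 2 (H × H) :=
  haveI : CompleteSpace (LinearMap.ker (T : WithLp 2 (H × H) →ₗ[ℂ] WithLp 2 (H × H))) := T.isClosed_ker.completeSpace_coe
  (LinearMap.ker (T : WithLp 2 (H × H) →ₗ[ℂ] WithLp 2 (H × H))).subtypeL ∘L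
    Submodule.orthogonalProjectionOnto (LinearMap.ker (T : WithLp 2 (H × H) →ₗ[ℂ] WithLp 2 (H × H)))

/-! Let `P` be the projection onto `ker T` and `S = A ∘ fst ∘ P`, `S' = B ∘ snd ∘ P`. Since `P` is
a selfadjoint idempotent, `A X A* = S S*` and `B Y B* = S' S'*`. A vector `P w` lies in `ker T`,
i.e. `A (P w).1 = B (P w).2`, so `S` and `S'` both take values in `range A ∩ range B`. Finally
`‖√(S S*) x‖ = ‖S* x‖`, so Douglas' factorization gives `√(S S*) = S U*` for some `U`, whence
`range √(S S*) ⊆ range S`. -/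

section Douglas

variable {𝕜 E F G : Type*} [RCLike 𝕜] [NormedAddCommGroup E] [NormedSpace 𝕜 E]
  [NormedAddCommGroup F] [NormedSpace 𝕜 F] [CompleteSpace F]
  [NormedAddCommGroup G] [InnerProductSpace 𝕜 G] [CompleteSpace G]

/-- Douglas' factorization lemma. -/
theorem ContinuousLinearMap.exists_comp_eq_of_norm_le (R : E →L[𝕜] F) (Q : E →L[𝕜] G) (C : ℝ)
    (h : ∀ x, ‖R x‖ ≤ C * ‖Q x‖) : ∃ U : G →L[𝕜] F, U ∘L Q = R := by
  set K := (LinearMap.range (Q : E →ₗ[𝕜] G)).topologicalClosure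
  let Q' : E →ₗ[𝕜] K := (Q : E →ₗ[𝕜] G).codRestrict K fun x =>
    Submodule.le_topologicalClosure _ (LinearMap.mem_range_self (Q : E →ₗ[𝕜] G) x)
  have hdense : DenseRange Q' := by
    rw [DenseRange, Subtype.dense_iff]
    exact fun y hy => by rwa [← Set.range_comp]
  refine ⟨(R : E →ₗ[𝕜] F).extendOfNorm Q' ∘L K.orthogonalProjectionOnto, ?_⟩
  ext x
  have hproj : K.orthogonalProjectionOnto (Q x) = Q' x :=
    K.orthogonalProjectionOnto_mem_subspace_eq_self (Q' x)
  simp only [comp_apply, hproj]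
  exact LinearMap.extendOfNorm_eq hdense ⟨C, h⟩ x

end Douglas

section SqrtRange

variable {E F : Type*} [NormedAddCommGroup E] [InnerProductSpace ℂ E] [CompleteSpace E]
  [NormedAddCommGroup F] [InnerProductSpace ℂ F] [CompleteSpace F]

theorem ContinuousLinearMap.norm_sqrt_comp_adjoint_apply (S : F →L[ℂ] E) (x : E) :
    ‖CFC.sqrt (S ∘L adjoint S) x‖ = ‖adjoint S x‖ := by
  have hnonneg : 0 ≤ S ∘L adjoint S :=
    (nonneg_iff_isPositive _).mpr S.isPositive_self_comp_adjoint
  have hsq :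
      adjoint (CFC.sqrt (S ∘L adjoint S)) ∘L CFC.sqrt (S ∘L adjoint S) = S ∘L adjoint S := by
    rw [(CFC.sqrt_nonneg _).isSelfAdjoint.adjoint_eq]
    exact CFC.sqrt_mul_sqrt_self _ hnonneg
  rw [← sq_eq_sq₀ (norm_nonneg _) (norm_nonneg _), apply_norm_sq_eq_inner_adjoint_left,
    apply_norm_sq_eq_inner_adjoint_left, hsq, adjoint_adjoint]

theorem ContinuousLinearMap.range_sqrt_comp_adjoint_le (S : F →L[ℂ] E) :
    LinearMap.range ((CFC.sqrt (S ∘L adjoint S) : E →L[ℂ] E) : E →ₗ[ℂ] E) ≤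
      LinearMap.range (S : F →ₗ[ℂ] E) := by
  obtain ⟨U, hU⟩ := (CFC.sqrt (S ∘L adjoint S)).exists_comp_eq_of_norm_le (adjoint S) 1
    fun x => by rw [norm_sqrt_comp_adjoint_apply, one_mul]
  have hfactor : S ∘L adjoint U = CFC.sqrt (S ∘L adjoint S) := by
    simpa only [adjoint_comp, adjoint_adjoint,
      (CFC.sqrt_nonneg (S ∘L adjoint S)).isSelfAdjoint.adjoint_eq] using congrArg adjoint hU
  rw [← hfactor]
  exact LinearMap.range_comp_le_range (adjoint U : E →ₗ[ℂ] F) (S : F →ₗ[ℂ] E)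

end SqrtRange

section Projection

variable {𝕜 E F : Type*} [RCLike 𝕜] [NormedAddCommGroup E] [InnerProductSpace 𝕜 E]
  [CompleteSpace E] [NormedAddCommGroup F] [InnerProductSpace 𝕜 F] [CompleteSpace F]

theorem WithLp.adjoint_fstL_apply (x : E) :
    adjoint (WithLp.fstL 2 𝕜 E F) x = WithLp.toLp 2 (x, 0) :=
  ext_inner_right 𝕜 fun y => by simp [adjoint_inner_left, WithLp.prod_inner_apply]

theorem WithLp.adjoint_sndL_apply (y : F) :
    adjoint (WithLp.sndL 2 𝕜 E F) y = WithLp.toLp 2 (0, y) :=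
  ext_inner_right 𝕜 fun x => by simp [adjoint_inner_left, WithLp.prod_inner_apply]

theorem ContinuousLinearMap.comp_starProjection_comp_adjoint (K : Submodule 𝕜 E)
    [K.HasOrthogonalProjection] (S : E →L[𝕜] F) :
    (S ∘L K.starProjection) ∘L adjoint (S ∘L K.starProjection) =
      S ∘L K.starProjection ∘L adjoint S := by
  rw [adjoint_comp, (isSelfAdjoint_starProjection K).adjoint_eq, comp_assoc,
    ← comp_assoc K.starProjection, ← mul_def, K.isIdempotentElem_starProjection.eq]

end Projection

theorem apply_fst_eq_apply_snd_of_apply_eq_zero {p : ENNReal} {E : Type*} [AddCommGroup E]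
    {A B : E → E} {T : WithLp p (E × E) → WithLp p (E × E)}
    (hT : ∀ u v : E, T ((WithLp.equiv p (E × E)).symm (u, v)) =
      (WithLp.equiv p (E × E)).symm (A u - B v, 0))
    {w : WithLp p (E × E)} (hw : T w = 0) : A w.fst = B w.snd := by
  have hsplit : (WithLp.equiv p (E × E)).symm (w.fst, w.snd) = w := rfl
  have h := hT w.fst w.snd
  rw [hsplit, hw] at h
  exact sub_eq_zero.mp (congrArg WithLp.fst h).symm

theorem kerProj_eq_starProjection (T : WithLp 2 (H × H) →L[ℂ] WithLp 2 (H × H)) :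
    kerProj T = (LinearMap.ker (T : WithLp 2 (H × H) →ₗ[ℂ] WithLp 2 (H × H))).starProjection :=
  rfl

theorem range_comp_kerProj_le {A B : H →L[ℂ] H} {T : WithLp 2 (H × H) →L[ℂ] WithLp 2 (H × H)}
    (hT : ∀ u v : H, T ((WithLp.equiv 2 (H × H)).symm (u, v)) =
      (WithLp.equiv 2 (H × H)).symm (A u - B v, 0)) :
    LinearMap.range (A ∘L WithLp.fstL 2 ℂ H H ∘L kerProj T : WithLp 2 (H × H) →ₗ[ℂ] H) ≤
        LinearMap.range (A : H →ₗ[ℂ] H) ⊓ LinearMap.range (B : H →ₗ[ℂ] H) ∧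
      LinearMap.range (B ∘L WithLp.sndL 2 ℂ H H ∘L kerProj T : WithLp 2 (H × H) →ₗ[ℂ] H) ≤
        LinearMap.range (A : H →ₗ[ℂ] H) ⊓ LinearMap.range (B : H →ₗ[ℂ] H) := by
  have hAB (w) : A (kerProj T w).fst = B (kerProj T w).snd :=
    apply_fst_eq_apply_snd_of_apply_eq_zero hT <|
      (LinearMap.ker (T : WithLp 2 (H × H) →ₗ[ℂ] WithLp 2 (H × H))).starProjection_apply_mem w
  constructor
  · rintro _ ⟨w, rfl⟩
    exact ⟨⟨_, rfl⟩, ⟨_, (hAB w).symm⟩⟩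
  · rintro _ ⟨w, rfl⟩
    exact ⟨⟨_, hAB w⟩, ⟨_, rfl⟩⟩

/-- Lemma 3.9 (square-root range inclusions): with `T(u,v) = (Au - Bv, 0)` on `H × H`,
`P` the orthogonal projection onto `ker T`, `X u = (P(u,0)).1` and `Y v = (P(0,v)).2`,
one has `range √(A X A*) ⊆ range A ∩ range B` and
`range √(B Y B*) ⊆ range A ∩ range B`. -/
theorem stmt13 (A B : H →L[ℂ] H)
    (T : WithLp 2 (H × H) →L[ℂ] WithLp 2 (H × H))
    (hT : ∀ u v : H, T ((WithLp.equiv 2 (H × H)).symm (u, v)) =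
      (WithLp.equiv 2 (H × H)).symm (A u - B v, 0))
    (X Y : H →L[ℂ] H)
    (hX : ∀ u : H,
      X u = (WithLp.equiv 2 (H × H) (kerProj T ((WithLp.equiv 2 (H × H)).symm (u, 0)))).1)
    (hY : ∀ v : H,
      Y v = (WithLp.equiv 2 (H × H) (kerProj T ((WithLp.equiv 2 (H × H)).symm (0, v)))).2) :
    LinearMap.range ((CFC.sqrt (A ∘L X ∘L adjoint A) : H →L[ℂ] H) : H →ₗ[ℂ] H) ≤
      LinearMap.range (A : H →ₗ[ℂ] H) ⊓ LinearMap.range (B : H →ₗ[ℂ] H) ∧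
    LinearMap.range ((CFC.sqrt (B ∘L Y ∘L adjoint B) : H →L[ℂ] H) : H →ₗ[ℂ] H) ≤
      LinearMap.range (A : H →ₗ[ℂ] H) ⊓ LinearMap.range (B : H →ₗ[ℂ] H) := by
  have hX' : X = WithLp.fstL 2 ℂ H H ∘L kerProj T ∘L adjoint (WithLp.fstL 2 ℂ H H) :=
    ext fun u => by simp [hX, WithLp.adjoint_fstL_apply]
  have hY' : Y = WithLp.sndL 2 ℂ H H ∘L kerProj T ∘L adjoint (WithLp.sndL 2 ℂ H H) :=
    ext fun v => by simp [hY, WithLp.adjoint_sndL_apply]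
  have hAXA : A ∘L X ∘L adjoint A = ((A ∘L WithLp.fstL 2 ℂ H H) ∘L kerProj T) ∘L
      adjoint ((A ∘L WithLp.fstL 2 ℂ H H) ∘L kerProj T) := by
    rw [hX', kerProj_eq_starProjection, comp_starProjection_comp_adjoint, adjoint_comp]
    simp only [comp_assoc]
  have hBYB : B ∘L Y ∘L adjoint B = ((B ∘L WithLp.sndL 2 ℂ H H) ∘L kerProj T) ∘L
      adjoint ((B ∘L WithLp.sndL 2 ℂ H H) ∘L kerProj T) := by
    rw [hY', kerProj_eq_starProjection, comp_starProjection_comp_adjoint, adjoint_comp]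
    simp only [comp_assoc]
  obtain ⟨hA, hB⟩ := range_comp_kerProj_le hT
  rw [hAXA, hBYB]
  exact ⟨(range_sqrt_comp_adjoint_le _).trans hA, (range_sqrt_comp_adjoint_le _).trans hB⟩
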